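/- Let m be a positive integer, p ∈ [0,1], and let k > m be a fixed integer. For integers t ≥ 2 define H(j,t+1) = p(2mt+1-j)/(t(2mt+1-2m)) + (1-p)j/(2mt) and K(j,t+1) = 1 - H(j,t+1) for m ≤ j ≤ 2mt, and define G(1,t+1) = m·H(k-1,t+1)·K(k-1,t+1)^{m-1}. Then lim_{t→∞} G(1,t+1)·(t-1)/(t+1 - t·K(k,t+1)^m) = (2mp + (1-p)(k-1)) / (2 + 2mp + (1-p)k). -/
import Mathlib


open Filter

/-- The unconditional attachment probability `H(j,t+1)` to a vertex of degree `j`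
at time `t` in the PA-APA model (degree argument taken real). -/
noncomputable def Hpaapa (m : ℕ) (p : ℝ) (j : ℝ) (t : ℕ) : ℝ :=
  p * (2 * (m : ℝ) * t + 1 - j) / ((t : ℝ) * (2 * (m : ℝ) * t + 1 - 2 * m))
    + (1 - p) * j / (2 * (m : ℝ) * t)

lemma tendsto_lin (m : ℕ) (hm : 1 ≤ m) (c : ℝ) :
    Tendsto (fun t : ℕ => 2 * (m : ℝ) * t + c) atTop atTop := by
  have h : Tendsto (fun t : ℕ => (t : ℝ)) atTop atTop := tendsto_natCast_atTop_atTop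
  have hm' : (0:ℝ) < 2 * m := by positivity
  have := (h.const_mul_atTop hm')
  exact tendsto_atTop_add_const_right atTop c this

lemma tendsto_tH (m : ℕ) (hm : 1 ≤ m) (p j : ℝ) :
    Tendsto (fun t : ℕ => (t : ℝ) * Hpaapa m p j t) atTop
      (nhds (p + (1 - p) * j / (2 * m))) := by
  have hm0 : (m:ℝ) ≠ 0 := by positivity
  have hlin := tendsto_lin m hm (1 - 2 * m)
  have h0 : Tendsto (fun t : ℕ => (2 * (m:ℝ) - j) / (2 * (m:ℝ) * t + (1 - 2 * m))) atTop (nhds 0) :=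
    tendsto_const_nhds.div_atTop hlin
  have hg : Tendsto (fun t : ℕ => p * (1 + (2 * (m:ℝ) - j) / (2 * (m:ℝ) * t + (1 - 2 * m))) + (1-p)*j/(2*m)) atTop
      (nhds (p * (1 + 0) + (1-p)*j/(2*m))) := by
    exact (((tendsto_const_nhds.add h0).const_mul p).add tendsto_const_nhds)
  have : p * (1 + 0) + (1-p)*j/(2*m) = p + (1 - p) * j / (2 * m) := by ring
  rw [this] at hg
  refine hg.congr' ?_
  filter_upwards [eventually_atTop.mpr ⟨1, fun t ht => ht⟩] with t ht
  have ht0 : (0:ℝ) < t := by exact_mod_cast ht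
  have hD : (0:ℝ) < 2 * (m:ℝ) * t + (1 - 2 * m) := by
    have h1 : (1:ℝ) ≤ (t:ℝ) := by exact_mod_cast ht
    have h2 : (1:ℝ) ≤ (m:ℝ) := by exact_mod_cast hm
    nlinarith
  have h1 : (2 * (m:ℝ) * t + 1 - 2 * m) ≠ 0 := by nlinarith
  have h2 : (t:ℝ) ≠ 0 := ne_of_gt ht0
  simp only [Hpaapa]
  field_simp
  ring

set_option maxHeartbeats 1600000 in
/-- The limit determining the recurrence for the limiting degree distribution:
with `G(1,t+1) = m H(k-1,t+1) K(k-1,t+1)^{m-1}` and `K = 1 - H`,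
`G(1,t+1)(t-1)/(t+1 - t K(k,t+1)^m) → (2mp + (1-p)(k-1))/(2 + 2mp + (1-p)k)`. -/
theorem pa_apa_limit_one_edge (m k : ℕ) (hm : 1 ≤ m) (hk : m < k)
    (p : ℝ) (hp0 : 0 ≤ p) (hp1 : p ≤ 1) :
    Tendsto (fun t : ℕ =>
      ((m : ℝ) * Hpaapa m p ((k : ℝ) - 1) t * (1 - Hpaapa m p ((k : ℝ) - 1) t) ^ (m - 1))
        * ((t : ℝ) - 1) / ((t : ℝ) + 1 - (t : ℝ) * (1 - Hpaapa m p (k : ℝ) t) ^ m))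
      atTop
      (nhds ((2 * (m : ℝ) * p + (1 - p) * ((k : ℝ) - 1))
        / (2 + 2 * (m : ℝ) * p + (1 - p) * (k : ℝ)))) := by
  have hm0 : (0:ℝ) < m := by exact_mod_cast hm
  set C1 : ℝ := p + (1 - p) * ((k:ℝ) - 1) / (2 * m) with hC1
  set C2 : ℝ := p + (1 - p) * (k:ℝ) / (2 * m) with hC2
  have htH1 := tendsto_tH m hm p ((k:ℝ) - 1)
  have htH2 := tendsto_tH m hm p (k:ℝ)
  -- H → 0
  have hinv : Tendsto (fun t : ℕ => ((t:ℝ))⁻¹) atTop (nhds 0) :=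
    tendsto_inv_atTop_zero.comp tendsto_natCast_atTop_atTop
  have hH1 : Tendsto (fun t : ℕ => Hpaapa m p ((k:ℝ) - 1) t) atTop (nhds 0) := by
    have := htH1.mul hinv
    rw [mul_zero] at this
    refine this.congr' ?_
    filter_upwards [eventually_atTop.mpr ⟨1, fun t ht => ht⟩] with t ht
    have h2 : (t:ℝ) ≠ 0 := by positivity
    field_simp
  have hH2 : Tendsto (fun t : ℕ => Hpaapa m p (k:ℝ) t) atTop (nhds 0) := by
    have := htH2.mul hinv
    rw [mul_zero] at this
    refine this.congr' ?_
    filter_upwards [eventually_atTop.mpr ⟨1, fun t ht => ht⟩] with t ht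
    have h2 : (t:ℝ) ≠ 0 := by positivity
    field_simp
  -- pieces
  have hpow1 : Tendsto (fun t : ℕ => (1 - Hpaapa m p ((k:ℝ) - 1) t) ^ (m - 1)) atTop (nhds 1) := by
    have := (((tendsto_const_nhds (x := (1:ℝ))).sub hH1).pow (m - 1))
    simpa using this
  have hsum : Tendsto (fun t : ℕ => ∑ i ∈ Finset.range m, (1 - Hpaapa m p (k:ℝ) t) ^ i) atTop
      (nhds (m : ℝ)) := by
    have h1 : Tendsto (fun t : ℕ => (1 - Hpaapa m p (k:ℝ) t)) atTop (nhds 1) := by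
      simpa using ((tendsto_const_nhds (x := (1:ℝ))).sub hH2)
    have := tendsto_finset_sum (Finset.range m) (fun i _ => h1.pow i)
    simpa using this
  have hfrac : Tendsto (fun t : ℕ => ((t:ℝ) - 1) / t) atTop (nhds 1) := by
    have h : Tendsto (fun t : ℕ => 1 - ((t:ℝ))⁻¹) atTop (nhds (1 - 0)) :=
      tendsto_const_nhds.sub hinv
    rw [sub_zero] at h
    refine h.congr' ?_
    filter_upwards [eventually_atTop.mpr ⟨1, fun t ht => ht⟩] with t ht
    have h2 : (t:ℝ) ≠ 0 := by
      have : (1:ℝ) ≤ t := by exact_mod_cast ht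
      linarith
    field_simp
  -- numerator and denominator limits
  have hnum : Tendsto (fun t : ℕ =>
      (m:ℝ) * ((t:ℝ) * Hpaapa m p ((k:ℝ) - 1) t) * (1 - Hpaapa m p ((k:ℝ) - 1) t) ^ (m - 1)
        * (((t:ℝ) - 1) / t)) atTop (nhds ((m:ℝ) * C1 * 1 * 1)) :=
    (((tendsto_const_nhds.mul htH1).mul hpow1).mul hfrac)
  have hden : Tendsto (fun t : ℕ =>
      1 + ((t:ℝ) * Hpaapa m p (k:ℝ) t) * ∑ i ∈ Finset.range m, (1 - Hpaapa m p (k:ℝ) t) ^ i)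
      atTop (nhds (1 + C2 * m)) :=
    tendsto_const_nhds.add (htH2.mul hsum)
  have hden0 : (1 : ℝ) + C2 * m ≠ 0 := by
    have hk0 : (0:ℝ) ≤ (k:ℝ) := by positivity
    have : 0 ≤ C2 * m := by
      have : 0 ≤ C2 := by
        rw [hC2]
        have : 0 ≤ (1 - p) * (k:ℝ) / (2 * m) := by
          apply div_nonneg _ (by positivity)
          nlinarith
        linarith
      positivity
    linarith
  have hlim := hnum.div hden hden0
  have hval : (m:ℝ) * C1 * 1 * 1 / (1 + C2 * m)
      = (2 * (m : ℝ) * p + (1 - p) * ((k : ℝ) - 1)) / (2 + 2 * (m : ℝ) * p + (1 - p) * (k : ℝ)) := by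
    rw [hC1, hC2]
    have hm' : (m:ℝ) ≠ 0 := ne_of_gt hm0
    rw [div_eq_div_iff]
    · field_simp
      ring
    · have h2 : (0:ℝ) < 1 + (p + (1 - p) * (k:ℝ) / (2 * m)) * m := by
        have hk0 : (0:ℝ) ≤ (k:ℝ) := by positivity
        have : 0 ≤ (1 - p) * (k:ℝ) / (2 * m) := by
          apply div_nonneg _ (by positivity)
          nlinarith
        nlinarith
      exact ne_of_gt h2
    · have hk0 : (0:ℝ) ≤ (k:ℝ) := by positivity
      have : 0 ≤ (1 - p) * (k:ℝ) := by nlinarith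
      nlinarith
  rw [hval] at hlim
  refine hlim.congr' ?_
  filter_upwards [eventually_atTop.mpr ⟨1, fun t ht => ht⟩] with t ht
  have ht1 : (1:ℝ) ≤ (t:ℝ) := by exact_mod_cast ht
  have ht0 : (t:ℝ) ≠ 0 := by linarith
  simp only [Pi.div_apply]
  set H1 := Hpaapa m p ((k:ℝ) - 1) t
  set H2 := Hpaapa m p (k:ℝ) t
  set S := ∑ i ∈ Finset.range m, (1 - H2) ^ i with hS
  have hgeom : S * ((1 - H2) - 1) = (1 - H2) ^ m - 1 := geom_sum_mul (1 - H2) m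
  have hgeom' : (1 - H2) ^ m = 1 - H2 * S := by nlinarith [hgeom]
  have hDen : (t:ℝ) + 1 - (t:ℝ) * (1 - H2) ^ m = 1 + ((t:ℝ) * H2) * S := by
    rw [hgeom']; ring
  rw [hDen]
  congr 1
  field_simp
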